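/- Let 0<q<1, C_n = (1/4)(1-(-1)ⁿq^{n/2})(1-(-1)ⁿq^{(n-1)/2}), b_n = 2C_n q^{-(n-1)/2}, α = (q^{1/2}+q^{-1/2})/2, and d_n = (b_{n-1}C_n - α b_n C_{n-1})C_{n-2}. Then d_n = (q-1) q^{-n/2} C_n C_{n-1} C_{n-2} for all n ≥ 2. -/

import Mathlib

noncomputable def alphaQ (q : ℝ) : ℝ := (q ^ ((1 : ℝ) / 2) + q ^ (-(1 : ℝ) / 2)) / 2

noncomputable def Cn (q : ℝ) (n : ℕ) : ℝ :=
  (1 / 4) * (1 - (-1 : ℝ) ^ n * q ^ ((n : ℝ) / 2)) * (1 - (-1 : ℝ) ^ n * q ^ (((n : ℝ) - 1) / 2))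

noncomputable def bn (q : ℝ) (n : ℕ) : ℝ := 2 * Cn q n * q ^ (-((n : ℝ) - 1) / 2)

noncomputable def dn (q : ℝ) (n : ℕ) : ℝ :=
  (bn q (n - 1) * Cn q n - alphaQ q * bn q n * Cn q (n - 1)) * Cn q (n - 2)

/-! Writing `s = q^(1/2)` and `t = q^(-n/2)`, one has `b_n = 2 C_n s t`, `b_{n-1} = 2 C_{n-1} q t`
and `α s = (q + 1) / 2`, so the bracket in `d_n` is `2 C_n C_{n-1} t (q - (q + 1) / 2)`. -/

section

variable {q : ℝ}

theorem alphaQ_mul_rpow_half (hq : 0 < q) : alphaQ q * q ^ ((1 : ℝ) / 2) = (q + 1) / 2 := by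
  have hsq : q ^ ((1 : ℝ) / 2) * q ^ ((1 : ℝ) / 2) = q := by
    rw [← Real.rpow_add hq]; norm_num
  have hinv : q ^ (-(1 : ℝ) / 2) * q ^ ((1 : ℝ) / 2) = 1 := by
    rw [← Real.rpow_add hq]; norm_num
  rw [alphaQ]
  linear_combination (hsq + hinv) / 2

theorem bn_eq (hq : 0 < q) (n : ℕ) :
    bn q n = 2 * Cn q n * q ^ ((1 : ℝ) / 2) * q ^ (-(n : ℝ) / 2) := by
  rw [bn, mul_assoc (2 * Cn q n), ← Real.rpow_add hq]
  ring_nf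

theorem bn_sub_one (hq : 0 < q) {n : ℕ} (hn : 1 ≤ n) :
    bn q (n - 1) = 2 * Cn q (n - 1) * q * q ^ (-(n : ℝ) / 2) := by
  have hexp : -(((n - 1 : ℕ) : ℝ) - 1) / 2 = -(n : ℝ) / 2 + 1 := by
    rw [Nat.cast_sub hn]; ring
  rw [bn, hexp, Real.rpow_add_one hq.ne']
  ring

end

theorem stmt_13_general (q : ℝ) (hq0 : 0 < q) (n : ℕ) (hn : 2 ≤ n) :
    dn q n = (q - 1) * q ^ (-(n : ℝ) / 2) * Cn q n * Cn q (n - 1) * Cn q (n - 2) := by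
  rw [dn, bn_sub_one hq0 (by omega), bn_eq hq0]
  linear_combination (-2 * Cn q n * Cn q (n - 1) * Cn q (n - 2) * q ^ (-(n : ℝ) / 2)) *
    alphaQ_mul_rpow_half hq0

theorem stmt_13 (q : ℝ) (hq0 : 0 < q) (hq1 : q < 1) (n : ℕ) (hn : 2 ≤ n) :
    dn q n = (q - 1) * q ^ (-(n : ℝ) / 2) * Cn q n * Cn q (n - 1) * Cn q (n - 2) :=
  stmt_13_general q hq0 n hn
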